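/- If m ≥ n + 2 and H_t(m) is defined for a tree ordinal t, then h_t(n) is defined and h_t(n) ≤ H_t(m), where H is the tree-ordinal Hardy function with standard fundamental sequences and h the tree-ordinal Hardy function with worm-induced fundamental sequences (with argument increment at limits). -/

import Mathlib

/-- Tree ordinals as formal terms: `0`, and `ω^{t₁} + ⋯ + ω^{tₙ}` for tree
ordinals `t₁, …, tₙ` (no ordering condition on the exponents).
`oadd e r` denotes `r + ω^e`, i.e. `e` is the exponent of the **rightmost**
summand and `r` collects the summands to its left. -/
inductive T : Type where
  | zero : T
  | oadd : T → T → T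
deriving DecidableEq

namespace T

/-- The induced ordinal `o(t)` of a tree term (ordinal arithmetic, so smaller
summands may be absorbed). -/
noncomputable def o : T → Ordinal.{0}
  | zero => 0
  | oadd e r => o r + Ordinal.omega0 ^ o e

/-- The norm: `N0 = 0`, `N(ω^α + β) = 1 + Nα + Nβ`. -/
def norm : T → ℕ
  | zero => 0
  | oadd e r => 1 + norm e + norm r

/-- `rep e r x = r + ω^e · x`. -/
def rep (e r : T) : ℕ → T
  | 0 => r
  | x + 1 => oadd e (rep e r x)

/-- The standard fundamental sequences on tree terms:
`0[x] = 0`, `1[x] = 0`, `(t+1)[x] = t`, `(t + ω^{s+1})[x] = t + ω^s · x`,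
`(t + ω^λ)[x] = t + ω^{λ[x]}` for a limit term `λ`. -/
def fund : T → ℕ → T
  | zero, _ => zero
  | oadd zero r, _ => r
  | oadd (oadd zero e') r, x => rep e' r x
  | oadd (oadd (oadd a b) e') r, x => oadd (fund (oadd (oadd a b) e') x) r

/-- Auxiliary sum for the ordinal correction function: `crSum t m` adds
`N(ω^{tᵢ})` for each summand `ω^{tᵢ}` of `t` whose exponent is smaller (as an
ordinal) than some exponent strictly to its right (where `m` is the maximum of
the exponents lying to the right of all of `t`). -/
noncomputable def crSum : T → Ordinal.{0} → ℕ
  | zero, _ => 0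
  | oadd e r, m => (if o e < m then 1 + norm e else 0) + crSum r (max m (o e))

mutual
/-- The ordinal correction function `Cr`:
`Cr(0) = 0` and `Cr(t) = Σ {N(ω^{tᵢ}) : tᵢ < tⱼ for some j > i} + max Cr(tᵢ)`. -/
noncomputable def cr : T → ℕ
  | zero => 0
  | oadd e r => crSum (oadd e r) 0 + max (cr e) (crMax r)

/-- Maximum of `Cr` over the exponents of a term. -/
noncomputable def crMax : T → ℕ
  | zero => 0
  | oadd e r => max (cr e) (crMax r)
end

/-- Cantor normal form predicate: exponents are (weakly) increasing from the
rightmost summand leftwards, and all exponents are themselves in CNF.  Terms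
satisfying `NF` faithfully represent the ordinals below `ε₀`. -/
def NF : T → Prop
  | zero => True
  | oadd e r => NF e ∧ NF r ∧ (match r with | zero => True | oadd f _ => o e ≤ o f)

/-- A term is a limit iff its rightmost summand has nonzero exponent. -/
def IsLim : T → Prop
  | oadd (oadd _ _) _ => True
  | _ => False

/-- Drop rightmost summands with exponent of ordinal value `< b`
(the absorption performed by ordinal addition). -/
noncomputable def cleanup (b : Ordinal.{0}) : T → T
  | zero => zero
  | oadd f s => if o f < b then cleanup b s else oadd f s

/-- Normalization of a tree term to the Cantor normal form of its induced
ordinal: `toNF t` is `NF`, and `o (toNF t) = o t`. -/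
noncomputable def toNF : T → T
  | zero => zero
  | oadd e r => oadd (toNF e) (cleanup (o e) (toNF r))

/-- `repOne r x = r + x`. -/
def repOne (r : T) : ℕ → T
  | 0 => r
  | x + 1 => oadd zero (repOne r x)

/-- `repPair s r x = r + (ω^s + 1) · x`. -/
def repPair (s r : T) : ℕ → T
  | 0 => r
  | x + 1 => oadd zero (oadd s (repPair s r x))

/-- The worm-induced fundamental sequences `⟦·⟧` on tree terms:
`0⟦x⟧ = 0`, `(t+1)⟦x⟧ = t`, `(t+ω)⟦x⟧ = t + x`,
`(t + ω^{s+1})⟦x⟧ = t + (ω^s + 1) · x` for `s ≠ 0`, and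
`(t + ω^λ)⟦x⟧ = t + ω^{λ⟦x⟧}` for a limit term `λ`. -/
def fundW : T → ℕ → T
  | zero, _ => zero
  | oadd zero r, _ => r
  | oadd (oadd zero zero) r, x => repOne r x
  | oadd (oadd zero (oadd a b)) r, x => repPair (oadd a b) r x
  | oadd (oadd (oadd a b) e') r, x => oadd (fundW (oadd (oadd a b) e') x) r

end T

/-- Graph of the Hardy functions (with the standard fundamental sequences):
`H_0(x) = x`, `H_{t+1}(x) = H_t(x+1)`, `H_t(x) = H_{t[x]}(x)` for limit `t`.
`HG t x y` means `H_t(x)` is defined with value `y`. -/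
inductive HG : T → ℕ → ℕ → Prop where
  | zero (x) : HG T.zero x x
  | succ {r x y} : HG r (x + 1) y → HG (T.oadd T.zero r) x y
  | lim {e r x y} (he : e ≠ T.zero) :
      HG (T.fund (T.oadd e r) x) x y → HG (T.oadd e r) x y

/-- Graph of the variant Hardy functions `h` based on the worm-induced
fundamental sequences: `h_0(x) = x`, `h_{t+1}(x) = h_t(x+1)`,
`h_t(x) = h_{t⟦x⟧}(x+1)` for limit `t`. -/
inductive hG : T → ℕ → ℕ → Prop where
  | zero (x) : hG T.zero x x
  | succ {r x y} : hG r (x + 1) y → hG (T.oadd T.zero r) x y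
  | lim {e r x y} (he : e ≠ T.zero) :
      hG (T.fundW (T.oadd e r) x) (x + 1) y → hG (T.oadd e r) x y


/-!
Both hierarchies are unfolded in parallel along `t`; at a limit `t` it suffices to show
`H_{t⟦n⟧}(m+1) ≤ H_{t[m]}(m)` and recurse on `t⟦n⟧` with arguments `n+1`, `m+1`. Since
`H_{r+ω^e} = H_r ∘ H_{ω^e}`, only the rightmost summand `ω^e` matters; `e = 1` is immediate.
For `e = s+1`, `s ≠ 0`, the worm sequence iterates `w ↦ H_{ω^s}(w+1)` `n` times, which the `m`-fold iterate of `H_{ω^s}`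
absorbs because `H_{ω^s}(w) ≥ 2w`. For a limit exponent `λ` one needs
`H_{ω^{λ⟦n⟧}}(m+1) ≤ H_{ω^{λ[m]}}(m)`. This follows from a syntactic certificate
`Majorized L R`, built for `L = λ⟦n⟧`, `R = λ[m-1]`, which yields `H_{ω^L}(z) < H_{ω^R}(z')`
for all `2 ≤ z < z'` even inside matching exponent contexts; it is proved by induction on the
ordinal of the right-hand side. Throughout, descending from `A` to `A - 1` or to `A[w]` with
`w ≤ z` can only decrease `H_{ω^A}(z)` (the Bachmann property), which lets the right-hand side
be replaced by any term it reaches.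
-/

open Function
open scoped Ordinal

def ShiftLt (f g : ℕ → ℕ) : Prop := ∀ u w, 2 ≤ u → u < w → f u < g w

section Iterate

variable {f g : ℕ → ℕ}

theorem ShiftLt.mono_right (h : ShiftLt f g) {g' : ℕ → ℕ} (hg : ∀ w, 1 ≤ w → g w ≤ g' w) :
    ShiftLt f g' :=
  fun u w hu huw => (h u w hu huw).trans_le (hg w (by omega))

theorem ShiftLt.iterate_self (hf : id ≤ f) (hg : id ≤ g) (h : ShiftLt f g) :
    ShiftLt (fun u => f^[u] u) (fun w => g^[w] w) := by
  intro u w hu huw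
  have key : ∀ i, f^[i] u < g^[i] w ∧ 2 ≤ f^[i] u := by
    intro i
    induction i with
    | zero => exact ⟨huw, hu⟩
    | succ i ih =>
      rw [iterate_succ_apply', iterate_succ_apply']
      exact ⟨h _ _ ih.2 ih.1, ih.2.trans (hf _)⟩
  calc f^[u] u < g^[u] w := (key u).1
    _ ≤ g^[w] w := monotone_iterate_of_id_le hg huw.le w

theorem iterate_comp_add_one_le (hf : StrictMono f) (j x : ℕ) :
    (fun w => f (w + 1))^[j] x ≤ f^[j] (x + j) := by
  induction j with
  | zero => rfl
  | succ j ih =>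
    rw [iterate_succ_apply', iterate_succ_apply', ← add_assoc]
    exact hf.monotone (ih.trans_lt (hf.iterate j (lt_add_one _)))

theorem iterate_comp_add_one_le_iterate (hf : StrictMono f) (hf2 : ∀ w, 2 * w ≤ f w)
    {n m : ℕ} (h : n + 1 ≤ m) : (fun w => f (w + 1))^[n] (m + 1) ≤ f^[m] m := by
  have hbig : m + 1 + n ≤ f^[m - n] m :=
    calc m + 1 + n ≤ f^[1] m := by have := hf2 m; rw [iterate_one]; omega
      _ ≤ f^[m - n] m := monotone_iterate_of_id_le hf.id_le (by omega) m
  calc (fun w => f (w + 1))^[n] (m + 1) ≤ f^[n] (m + 1 + n) := iterate_comp_add_one_le hf n _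
    _ ≤ f^[n] (f^[m - n] m) := (hf.iterate n).monotone hbig
    _ = f^[m] m := by rw [← iterate_add_apply, Nat.add_sub_cancel' (by omega)]

end Iterate

namespace T

theorem o_lt_oadd (e r : T) : o r < o (oadd e r) :=
  lt_add_of_pos_right _ (Ordinal.opow_pos _ Ordinal.omega0_pos)

theorem o_oadd_lt_oadd {e e' : T} (h : o e < o e') (r : T) : o (oadd e r) < o (oadd e' r) :=
  (add_lt_add_iff_left _).2 ((Ordinal.opow_lt_opow_iff_right Ordinal.one_lt_omega0).2 h)

theorem o_oadd_oadd_zero (s r : T) : o (oadd (oadd zero s) r) = o r + ω ^ o s * ω := by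
  simp [o, Ordinal.opow_add]

theorem o_rep (e r : T) : ∀ x : ℕ, o (rep e r x) = o r + ω ^ o e * x
  | 0 => by simp [rep]
  | x + 1 => by rw [rep, o, o_rep e r x, Nat.cast_succ, mul_add_one, add_assoc]

theorem o_repPair (s r : T) : ∀ x : ℕ, o (repPair s r x) = o r + (ω ^ o s + 1) * x
  | 0 => by simp [repPair]
  | x + 1 => by
    simp only [repPair, o, o_repPair s r x, Nat.cast_succ, mul_add_one, add_assoc,
      Ordinal.opow_zero]

theorem repOne_eq_rep (r : T) : ∀ x : ℕ, repOne r x = rep zero r x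
  | 0 => rfl
  | x + 1 => congrArg (oadd zero) (repOne_eq_rep r x)

theorem rep_zero_oadd_zero (r : T) : ∀ x : ℕ, rep zero (oadd zero r) x = rep zero r (x + 1)
  | 0 => rfl
  | x + 1 => congrArg (oadd zero) (rep_zero_oadd_zero r x)

theorem o_fund_lt :
    ∀ {e : T}, e ≠ zero → ∀ (r : T) (x : ℕ), o (fund (oadd e r) x) < o (oadd e r)
  | oadd zero s, _, r, x => by
    rw [fund, o_rep, o_oadd_oadd_zero]
    exact (add_lt_add_iff_left _).2 (mul_lt_mul_of_pos_left (Ordinal.natCast_lt_omega0 x)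
      (Ordinal.opow_pos _ Ordinal.omega0_pos))
  | oadd (oadd a b) s, _, r, x => o_oadd_lt_oadd (o_fund_lt (by simp) s x) r

theorem o_fundW_lt :
    ∀ {e : T}, e ≠ zero → ∀ (r : T) (x : ℕ), o (fundW (oadd e r) x) < o (oadd e r)
  | oadd zero zero, _, r, x => by
    rw [fundW, repOne_eq_rep]
    exact o_fund_lt (e := oadd zero zero) (by simp) r x
  | oadd zero (oadd a b), _, r, x => by
    rw [fundW, o_repPair, o_oadd_oadd_zero]
    have hpos := Ordinal.opow_pos (o (oadd a b)) Ordinal.omega0_pos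
    refine (add_lt_add_iff_left _).2 (lt_of_le_of_lt (b := ω ^ o (oadd a b) * (2 * x : ℕ))
      ?_ (mul_lt_mul_of_pos_left (Ordinal.natCast_lt_omega0 _) hpos))
    rw [Ordinal.natCast_mul, ← mul_assoc, Nat.cast_two, ← one_add_one_eq_two, mul_add,
      mul_one]
    gcongr
    exact Order.one_le_iff_pos.2 hpos
  | oadd (oadd a b) s, _, r, x => o_oadd_lt_oadd (o_fundW_lt (by simp) s x) r

theorem fund_ne_zero : ∀ (a b g : T) {x : ℕ}, 1 ≤ x → fund (oadd (oadd a b) g) x ≠ zero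
  | zero, b, g, x + 1, _ => by simp [fund, rep]
  | oadd _ _, _, _, _, _ => by simp [fund]

noncomputable def hardy : T → ℕ → ℕ
  | zero, x => x
  | oadd zero r, x => hardy r (x + 1)
  | oadd (oadd a b) r, x => hardy (fund (oadd (oadd a b) r) x) x
termination_by t _ => o t
decreasing_by
  · exact o_lt_oadd _ _
  · exact o_fund_lt (by simp) _ _

noncomputable def wormHardy : T → ℕ → ℕ
  | zero, x => x
  | oadd zero r, x => wormHardy r (x + 1)
  | oadd (oadd a b) r, x => wormHardy (fundW (oadd (oadd a b) r) x) (x + 1)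
termination_by t _ => o t
decreasing_by
  · exact o_lt_oadd _ _
  · exact o_fundW_lt (by simp) _ _

@[simp] theorem hardy_zero (x : ℕ) : hardy zero x = x := by rw [hardy]

@[simp] theorem hardy_succ (r : T) (x : ℕ) : hardy (oadd zero r) x = hardy r (x + 1) := by
  rw [hardy]

theorem hardy_lim (a b r : T) (x : ℕ) :
    hardy (oadd (oadd a b) r) x = hardy (fund (oadd (oadd a b) r) x) x := by
  rw [hardy]

@[simp] theorem wormHardy_zero (x : ℕ) : wormHardy zero x = x := by rw [wormHardy]

@[simp] theorem wormHardy_succ (r : T) (x : ℕ) :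
    wormHardy (oadd zero r) x = wormHardy r (x + 1) := by
  rw [wormHardy]

theorem wormHardy_lim (a b r : T) (x : ℕ) :
    wormHardy (oadd (oadd a b) r) x = wormHardy (fundW (oadd (oadd a b) r) x) (x + 1) := by
  rw [wormHardy]

noncomputable def hardyPow (e : T) (x : ℕ) : ℕ := hardy (oadd e zero) x

@[simp] theorem hardyPow_zero (x : ℕ) : hardyPow zero x = x + 1 := by simp [hardyPow]

theorem hardy_oadd : ∀ (e r : T) (x : ℕ), hardy (oadd e r) x = hardy r (hardyPow e x)
  | zero, r, x => by simp
  | oadd zero g, r, x => by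
    have hrep : ∀ (j : ℕ) (r : T) (z : ℕ),
        hardy (rep g r j) z = hardy r (hardy (rep g zero j) z) := by
      intro j
      induction j with
      | zero => simp [rep]
      | succ j ih =>
        intro r z
        rw [rep, rep, hardy_oadd g, hardy_oadd g, ih]
    rw [hardyPow, hardy_lim, hardy_lim]
    exact hrep x r x
  | oadd (oadd a b) g, r, x => by
    rw [hardyPow, hardy_lim, hardy_lim]
    exact hardy_oadd (fund (oadd (oadd a b) g) x) r x
termination_by e => o e
decreasing_by
  · exact o_lt_oadd _ _
  · exact o_lt_oadd _ _
  · exact o_fund_lt (by simp) _ _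

theorem hardy_rep (g r : T) : ∀ (j z : ℕ), hardy (rep g r j) z = hardy r ((hardyPow g)^[j] z)
  | 0, z => rfl
  | j + 1, z => by rw [rep, hardy_oadd, hardy_rep g r j, ← iterate_succ_apply]

theorem hardy_repPair (s r : T) : ∀ (j z : ℕ),
    hardy (repPair s r j) z = hardy r ((fun w => hardyPow s (w + 1))^[j] z)
  | 0, z => rfl
  | j + 1, z => by
    rw [repPair, hardy_succ, hardy_oadd, hardy_repPair s r j, ← iterate_succ_apply]

theorem hardyPow_succ (g : T) (x : ℕ) : hardyPow (oadd zero g) x = (hardyPow g)^[x] x := by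
  rw [hardyPow, hardy_lim]
  exact (hardy_rep g zero x x).trans (hardy_zero _)

theorem hardyPow_lim (a b g : T) (x : ℕ) :
    hardyPow (oadd (oadd a b) g) x = hardyPow (fund (oadd (oadd a b) g) x) x := by
  rw [hardyPow, hardy_lim]
  rfl

inductive Step (z : ℕ) : T → T → Prop
  | pred (E : T) : Step z (oadd zero E) E
  | lim (a b g : T) {w : ℕ} (hw : w ≤ z) :
      Step z (oadd (oadd a b) g) (fund (oadd (oadd a b) g) w)

abbrev Steps (z : ℕ) : T → T → Prop := Relation.ReflTransGen (Step z)

theorem Step.o_lt {z : ℕ} {A B : T} : Step z A B → o B < o A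
  | pred _ => o_lt_oadd _ _
  | lim _ _ _ _ => o_fund_lt (by simp) _ _

theorem Steps.o_le {z : ℕ} {A B : T} (h : Steps z A B) : o B ≤ o A := by
  induction h with
  | refl => exact le_rfl
  | tail _ hstep ih => exact hstep.o_lt.le.trans ih

section Steps

variable {z : ℕ}

theorem steps_tail (hz : 1 ≤ z) : ∀ f g : T, Steps z (oadd f g) g
  | zero, g => .single (.pred g)
  | oadd zero s, g => by
    have hrep : ∀ j, Steps z (rep s g j) g := by
      intro j
      induction j with
      | zero => exact .refl
      | succ j ih => exact (steps_tail hz s _).trans ih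
    exact .head (.lim zero s g le_rfl) (hrep z)
  | oadd (oadd a b) s, g =>
    .head (.lim (oadd a b) s g le_rfl) (steps_tail hz (fund (oadd (oadd a b) s) z) g)
termination_by f => o f
decreasing_by
  · exact o_lt_oadd _ _
  · exact o_fund_lt (by simp) _ _

theorem steps_rep_of_le (hz : 1 ≤ z) (s g : T) {j k : ℕ} (h : k ≤ j) :
    Steps z (rep s g j) (rep s g k) := by
  induction j, h using Nat.le_induction with
  | base => exact .refl
  | succ j _ ih => exact (steps_tail hz s _).trans ih

theorem Steps.oadd_left (hz : 1 ≤ z) {X X' : T} (h : Steps z X X') (g : T) :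
    Steps z (oadd X g) (oadd X' g) := by
  induction h with
  | refl => exact .refl
  | tail _ hstep ih =>
    refine ih.trans ?_
    cases hstep with
    | pred => exact .head (.lim zero _ g le_rfl) (steps_rep_of_le hz _ g hz)
    | lim a b g₁ hw => exact .single (.lim (oadd a b) g₁ g hw)

/-- `nest L [t₁, …, tₖ] = tₖ + ω^(⋯ (t₁ + ω^L))`: `L` placed in a context of exponents. -/
def nest : T → List T → T
  | L, [] => L
  | L, t :: ts => nest (oadd L t) ts

theorem Steps.nest (hz : 1 ≤ z) {X X' : T} (h : Steps z X X') :
    ∀ ts : List T, Steps z (T.nest X ts) (T.nest X' ts)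
  | [] => h
  | t :: ts => (h.oadd_left hz t).nest hz ts

theorem steps_fund_of_le (hz : 1 ≤ z) :
    ∀ (f g : T) {w : ℕ}, w ≤ z → Steps z (fund (oadd f g) z) (fund (oadd f g) w)
  | zero, _, _, _ => .refl
  | oadd zero s, g, _, hw => steps_rep_of_le hz s g hw
  | oadd (oadd a b) s, g, _, hw => (steps_fund_of_le hz (oadd a b) s hw).oadd_left hz g

theorem steps_succ (hz : 1 ≤ z) : ∀ f B : T, Steps z (oadd f B) (oadd zero B)
  | zero, _ => .refl
  | oadd zero s, B =>
    .head (.lim zero s B le_rfl) ((steps_rep_of_le hz s B hz).trans (steps_succ hz s B))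
  | oadd (oadd a b) s, B =>
    .head (.lim (oadd a b) s B le_rfl) (steps_succ hz (fund (oadd (oadd a b) s) z) B)
termination_by f => o f
decreasing_by
  · exact o_lt_oadd _ _
  · exact o_fund_lt (by simp) _ _

theorem steps_one (hz : 1 ≤ z) : ∀ {E : T}, E ≠ zero → Steps z E (oadd zero zero)
  | oadd f zero, _ => steps_succ hz f zero
  | oadd f (oadd f' g), _ =>
    (steps_succ hz f _).trans (.head (.pred _) (steps_one hz (by simp)))

theorem steps_fund_succ (hz : 2 ≤ z) : ∀ {f : T}, f ≠ zero → ∀ (g : T) (u : ℕ),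
    Steps z (fund (oadd f g) (u + 1)) (oadd zero (fund (oadd f g) u))
  | oadd zero s, _, g, u => steps_succ (by omega) s (rep s g u)
  | oadd (oadd a b) s, _, g, u => by
    set Y := fund (oadd (oadd a b) s) u
    have h₁ : Steps z (fund (oadd (oadd (oadd a b) s) g) (u + 1)) (oadd (oadd zero Y) g) :=
      (steps_fund_succ hz (by simp) s u).oadd_left (by omega) g
    have h₂ : Steps z (oadd (oadd zero Y) g) (rep Y g 2) := .single (.lim zero Y g hz)
    exact (h₁.trans h₂).trans (steps_succ (by omega) Y (oadd Y g))

end Steps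

theorem le_hardyPow : ∀ E : T, id ≤ hardyPow E
  | zero, a => by simp
  | oadd zero g, a => by
    rw [hardyPow_succ]
    exact id_le_iterate_of_id_le (le_hardyPow g) a a
  | oadd (oadd x y) g, a => by
    rw [hardyPow_lim]
    exact le_hardyPow (fund (oadd (oadd x y) g) a) a
termination_by E => o E
decreasing_by
  · exact o_lt_oadd _ _
  · exact o_fund_lt (by simp) _ _

theorem hardyPow_le_of_steps {z : ℕ} (hz : 1 ≤ z) :
    ∀ {E E' : T}, Steps z E E' → hardyPow E' z ≤ hardyPow E z
  | E, E', h => by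
    rcases h.cases_head with rfl | ⟨C, hstep, hCE'⟩
    · exact le_rfl
    have hC : hardyPow C z ≤ hardyPow E z := by
      cases hstep with
      | pred =>
        rw [hardyPow_succ]
        exact monotone_iterate_of_id_le (le_hardyPow C) hz z
      | lim a b g hw =>
        rw [hardyPow_lim]
        exact hardyPow_le_of_steps hz (steps_fund_of_le hz (oadd a b) g hw)
    exact (hardyPow_le_of_steps hz hCE').trans hC
termination_by E => o E
decreasing_by
  · subst_vars; exact o_fund_lt (by simp) _ _
  · exact hstep.o_lt

theorem hardyPow_strictMono : ∀ E : T, StrictMono (hardyPow E)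
  | zero => fun a b h => by simpa using h
  | oadd zero g => fun a b h => by
    rw [hardyPow_succ, hardyPow_succ]
    calc (hardyPow g)^[a] a < (hardyPow g)^[a] b := (hardyPow_strictMono g).iterate a h
      _ ≤ (hardyPow g)^[b] b := monotone_iterate_of_id_le (le_hardyPow g) h.le b
  | oadd (oadd x y) g => fun a b h => by
    rw [hardyPow_lim, hardyPow_lim]
    calc hardyPow (fund (oadd (oadd x y) g) a) a < hardyPow (fund (oadd (oadd x y) g) a) b :=
          hardyPow_strictMono _ h
      _ ≤ hardyPow (fund (oadd (oadd x y) g) b) b :=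
          hardyPow_le_of_steps (by omega) (steps_fund_of_le (by omega) (oadd x y) g h.le)
termination_by E => o E
decreasing_by
  · exact o_lt_oadd _ _
  · exact o_fund_lt (by simp) _ _

theorem hardyPow_mono (E : T) : Monotone (hardyPow E) := (hardyPow_strictMono E).monotone

theorem two_mul_le_hardyPow {E : T} (hE : E ≠ zero) (a : ℕ) : 2 * a ≤ hardyPow E a := by
  rcases Nat.eq_zero_or_pos a with rfl | ha
  · exact Nat.zero_le _
  calc 2 * a = hardyPow (oadd zero zero) a := by
        rw [hardyPow_succ, funext hardyPow_zero, two_mul]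
        exact (Nat.succ_iterate a a).symm
    _ ≤ hardyPow E a := hardyPow_le_of_steps ha (steps_one ha hE)

theorem hardy_mono : ∀ t : T, Monotone (hardy t)
  | zero => fun _ _ h => by simpa using h
  | oadd e r => fun x y h => by
    rw [hardy_oadd, hardy_oadd]
    exact hardy_mono r (hardyPow_mono e h)

theorem o_nest_lt {X Y : T} (h : o X < o Y) : ∀ ts : List T, o (nest X ts) < o (nest Y ts)
  | [] => h
  | t :: ts => o_nest_lt (o_oadd_lt_oadd h t) ts

theorem hardyPow_nest_lim : ∀ {σ : T}, σ ≠ zero → ∀ (u : T) (ts : List T) (z : ℕ),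
    hardyPow (nest (oadd σ u) ts) z = hardyPow (nest (fund (oadd σ u) z) ts) z
  | oadd a b, _, u, [], z => hardyPow_lim a b u z
  | oadd a b, _, u, t :: ts, z =>
    hardyPow_nest_lim (σ := oadd (oadd a b) u) (by simp) t ts z

/-- A certificate that `ω^L` is dominated by `ω^R` in every pair of matching contexts,
see `Majorized.shiftLt_nest`. -/
inductive Majorized : T → T → Prop
  | of_steps {L R : T} : (∀ z, 1 ≤ z → Steps z R L) → Majorized L R
  | reps {V V' W W' : T} {c c' : ℕ} :
      Majorized V V' → Majorized W W' → c ≤ c' → Majorized (rep V W c) (rep V' W' c')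
  | succ_reps {σ A X : T} {c c' : ℕ} : σ ≠ zero → Majorized A X → c ≤ c' → 1 ≤ c' →
      Majorized (rep σ (oadd zero A) c) (rep σ X c')

theorem Majorized.refl (X : T) : Majorized X X := .of_steps fun _ _ => .refl

theorem Majorized.fund_oadd {σ A X : T} (hσ : σ ≠ zero) (d : Majorized A X) (z : ℕ) :
    Majorized (fund (oadd σ A) z) (fund (oadd σ X) z) :=
  match σ, hσ with
  | oadd zero s, _ => .reps (.refl s) d le_rfl
  | oadd (oadd _ _) _, _ => .reps (c := 1) (c' := 1) (.refl _) d le_rfl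

theorem shiftLt_of_steps_right {f : ℕ → ℕ} {R R₀ : T} {ts' : List T}
    (h : ∀ z, 1 ≤ z → Steps z R R₀) (hlt : ShiftLt f (hardyPow (nest R₀ ts'))) :
    ShiftLt f (hardyPow (nest R ts')) :=
  hlt.mono_right fun w hw => hardyPow_le_of_steps hw ((h w hw).nest hw ts')

/-- The induction hypothesis of `Majorized.shiftLt_nest`. -/
def ComparisonBelow (N : Ordinal) : Prop :=
  ∀ ⦃L R : T⦄ ⦃ts ts' : List T⦄, Majorized L R → List.Forall₂ Majorized ts ts' →
    o (nest R ts') < N → ShiftLt (hardyPow (nest L ts)) (hardyPow (nest R ts'))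

namespace ComparisonBelow

variable {N : Ordinal} {ts ts' : List T}

theorem shiftLt_succ (IH : ComparisonBelow N) {A X : T} (d : Majorized A X)
    (hl : List.Forall₂ Majorized ts ts') (hN : o (nest (oadd zero X) ts') ≤ N) :
    ShiftLt (hardyPow (nest (oadd zero A) ts)) (hardyPow (nest (oadd zero X) ts')) := by
  intro z z' hz hzz
  cases hl with
  | nil =>
    rw [nest, nest, hardyPow_succ, hardyPow_succ]
    exact ShiftLt.iterate_self (le_hardyPow A) (le_hardyPow X)
      (IH d .nil ((o_lt_oadd zero X).trans_le hN)) z z' hz hzz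
  | @cons t t' ts ts' dt hl =>
    simp only [nest]
    rw [hardyPow_nest_lim (by simp), hardyPow_nest_lim (by simp)]
    exact IH (.reps d dt hzz.le) hl ((o_nest_lt (o_fund_lt (by simp) t' z') ts').trans_le hN)
      z z' hz hzz

theorem shiftLt_lim (IH : ComparisonBelow N) {σ A X : T} (hσ : σ ≠ zero) (d : Majorized A X)
    (hl : List.Forall₂ Majorized ts ts') (hN : o (nest (oadd σ X) ts') ≤ N) :
    ShiftLt (hardyPow (nest (oadd σ A) ts)) (hardyPow (nest (oadd σ X) ts')) := by
  intro z z' hz hzz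
  rw [hardyPow_nest_lim hσ, hardyPow_nest_lim hσ]
  refine (IH (d.fund_oadd hσ z) hl ((o_nest_lt (o_fund_lt hσ X z) ts').trans_le hN)
    z z' hz hzz).trans_le ?_
  exact hardyPow_le_of_steps (by omega)
    ((steps_fund_of_le (by omega) σ X hzz.le).nest (by omega) ts')

theorem shiftLt_self (IH : ComparisonBelow N) (X : T) (hl : List.Forall₂ Majorized ts ts')
    (hN : o (nest X ts') ≤ N) : ShiftLt (hardyPow (nest X ts)) (hardyPow (nest X ts')) :=
  match X, hl with
  | zero, .nil => fun _ _ _ hzz => by simpa [nest] using hzz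
  | zero, .cons dt hl => IH.shiftLt_succ dt hl hN
  | oadd zero u, hl => IH.shiftLt_succ (.refl u) hl hN
  | oadd (oadd _ _) u, hl => IH.shiftLt_lim (by simp) (.refl u) hl hN

theorem shiftLt_oadd_succ (IH : ComparisonBelow N) {σ A X : T} (hσ : σ ≠ zero)
    (d : Majorized A X) (hl : List.Forall₂ Majorized ts ts')
    (hN : o (nest (oadd σ X) ts') ≤ N) :
    ShiftLt (hardyPow (nest (oadd σ (oadd zero A)) ts)) (hardyPow (nest (oadd σ X) ts')) := by
  intro z z' hz hzz
  have hlt : o (nest (fund (oadd σ X) z') ts') < N :=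
    (o_nest_lt (o_fund_lt hσ X z') ts').trans_le hN
  rw [hardyPow_nest_lim hσ, hardyPow_nest_lim hσ]
  match σ, hσ with
  | oadd zero zero, _ =>
    show hardyPow (nest (rep zero (oadd zero A) z) ts) z
      < hardyPow (nest (rep zero X z') ts') z'
    rw [rep_zero_oadd_zero]
    exact IH (.reps (.refl zero) d hzz) hl hlt z z' hz hzz
  | oadd zero (oadd _ _), _ =>
    exact IH (.succ_reps (by simp) d hzz.le (by omega)) hl hlt z z' hz hzz
  | oadd (oadd a b) s, _ =>
    have hY : fund (oadd (oadd a b) s) z ≠ zero := fund_ne_zero a b s (by omega)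
    have hsteps : Steps z' (fund (oadd (oadd (oadd a b) s) X) z')
        (oadd (oadd zero (fund (oadd (oadd a b) s) z)) X) :=
      Steps.oadd_left (by omega) ((steps_fund_of_le (by omega) (oadd a b) s hzz).trans
        (steps_fund_succ (by omega) (by simp) s z)) X
    refine lt_of_lt_of_le ?_ (hardyPow_le_of_steps (by omega) (hsteps.nest (by omega) ts'))
    rw [hardyPow_nest_lim (by simp)]
    refine IH (.succ_reps (c := 1) hY d (by omega) (by omega)) hl ?_ z z' hz hzz
    exact ((o_nest_lt (o_fund_lt (by simp) X z') ts').trans_le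
      (hsteps.nest (by omega) ts').o_le).trans hlt

end ComparisonBelow

theorem Majorized.shiftLt_nest {L R : T} (d : Majorized L R) {ts ts' : List T}
    (hl : List.Forall₂ Majorized ts ts') :
    ShiftLt (hardyPow (nest L ts)) (hardyPow (nest R ts')) := by
  suffices h : ∀ (N : Ordinal) {L R : T}, Majorized L R → ∀ {ts ts' : List T},
      List.Forall₂ Majorized ts ts' → o (nest R ts') ≤ N →
      ShiftLt (hardyPow (nest L ts)) (hardyPow (nest R ts')) from h _ d hl le_rfl
  intro N
  induction N using WellFoundedLT.induction with
  | _ N IHN =>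
  have IH : ComparisonBelow N := fun L R ts ts' d hl hlt => IHN _ hlt d hl le_rfl
  have o_le {R R₀ : T} {ts' : List T} (h : ∀ z, 1 ≤ z → Steps z R R₀) :
      o (nest R₀ ts') ≤ o (nest R ts') := ((h 1 le_rfl).nest le_rfl ts').o_le
  intro L R d
  induction d with
  | @of_steps L R h =>
    intro ts ts' hl hN
    exact shiftLt_of_steps_right h (IH.shiftLt_self L hl ((o_le h).trans hN))
  | @reps V V' W W' c c' dV dW hc ihV ihW =>
    intro ts ts' hl hN
    cases c with
    | zero =>
      have h z (hz : 1 ≤ z) := steps_rep_of_le hz V' W' (Nat.zero_le c')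
      exact shiftLt_of_steps_right h (ihW hl ((o_le h).trans hN))
    | succ k =>
      obtain ⟨k', rfl⟩ : ∃ k', c' = k' + 1 := ⟨c' - 1, by omega⟩
      exact ihV (.cons (.reps dV dW (by omega)) hl) hN
  | @succ_reps σ A X c c' hσ d hc hc' _ =>
    intro ts ts' hl hN
    cases c with
    | zero =>
      have h z (hz : 1 ≤ z) : Steps z (rep σ X c') (oadd zero X) :=
        (steps_rep_of_le hz σ X hc').trans (steps_succ hz σ X)
      exact shiftLt_of_steps_right h (IH.shiftLt_succ d hl ((o_le h).trans hN))
    | succ k =>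
      obtain ⟨k', rfl⟩ : ∃ k', c' = k' + 1 := ⟨c' - 1, by omega⟩
      rcases Nat.eq_zero_or_pos k' with rfl | hk'
      · obtain rfl : k = 0 := by omega
        exact IH.shiftLt_oadd_succ hσ d hl hN
      · exact IH.shiftLt_lim hσ (.succ_reps hσ d (by omega) hk') hl hN

theorem majorized_oadd_repPair {σ : T} (hσ : σ ≠ zero) (ψ : T) :
    ∀ {p c : ℕ}, p < c → Majorized (oadd σ (repPair σ ψ p)) (rep σ ψ c)
  | 0, _, hc => .of_steps fun _ hz => steps_rep_of_le hz σ ψ hc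
  | _ + 1, _ + 1, hc =>
    .succ_reps (c := 1) (c' := 1) hσ (majorized_oadd_repPair hσ ψ (by omega)) le_rfl le_rfl
  | _ + 1, 0, hc => absurd hc (by omega)

theorem majorized_fundW_fund : ∀ {f : T}, f ≠ zero → ∀ (g : T) {n m : ℕ}, n < m →
    Majorized (fundW (oadd f g) n) (fund (oadd f g) m)
  | oadd zero zero, _, g, _, _, h => .of_steps fun _ hz => by
    show Steps _ (rep zero g _) (repOne g _)
    rw [repOne_eq_rep]
    exact steps_rep_of_le hz zero g h.le
  | oadd zero (oadd _ _), _, g, 0, m, _ =>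
    .of_steps fun _ hz => steps_rep_of_le hz _ g (Nat.zero_le m)
  | oadd zero (oadd _ _), _, g, _ + 1, _ + 1, h =>
    .succ_reps (c := 0) (c' := 1) (by simp) (majorized_oadd_repPair (by simp) g (by omega))
      (Nat.zero_le 1) le_rfl
  | oadd zero (oadd _ _), _, _, _ + 1, 0, h => absurd h (by omega)
  | oadd (oadd _ _) s, _, g, _, _, h =>
    .reps (c := 1) (c' := 1) (majorized_fundW_fund (by simp) s h) (.refl g) le_rfl

theorem hardyPow_fundW_le_fund {f : T} (hf : f ≠ zero) (g : T) {n m : ℕ} (h : n + 2 ≤ m) :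
    hardyPow (fundW (oadd f g) n) (m + 1) ≤ hardyPow (fund (oadd f g) m) m := by
  obtain ⟨m, rfl⟩ : ∃ k, m = k + 1 := ⟨m - 1, by omega⟩
  have hY : fund (oadd f g) m ≠ zero := by
    match f, hf with
    | oadd a b, _ => exact fund_ne_zero a b g (by omega)
  have h2 := two_mul_le_hardyPow hY (m + 1)
  set P := hardyPow (fund (oadd f g) m)
  have hw : m + 2 < P^[m] (m + 1) :=
    calc m + 2 < P^[1] (m + 1) := by rw [iterate_one]; omega
      _ ≤ P^[m] (m + 1) := monotone_iterate_of_id_le (le_hardyPow _) (by omega) _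
  calc hardyPow (fundW (oadd f g) n) (m + 1 + 1) ≤ P (P^[m] (m + 1)) :=
        ((majorized_fundW_fund hf g (by omega)).shiftLt_nest .nil _ _ (by omega) hw).le
    _ = hardyPow (oadd zero (fund (oadd f g) m)) (m + 1) := by
        rw [hardyPow_succ, iterate_succ_apply']
    _ ≤ hardyPow (fund (oadd f g) (m + 1)) (m + 1) :=
        hardyPow_le_of_steps (by omega) (steps_fund_succ (by omega) hf g m)

theorem hardy_fundW_le_fund : ∀ (a b r : T) {n m : ℕ}, n + 2 ≤ m →
    hardy (fundW (oadd (oadd a b) r) n) (m + 1) ≤ hardy (fund (oadd (oadd a b) r) m) m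
  | zero, zero, r, n, m, h => by
    show hardy (repOne r n) (m + 1) ≤ hardy (rep zero r m) m
    rw [repOne_eq_rep, hardy_rep, hardy_rep, funext hardyPow_zero]
    show hardy r (Nat.succ^[n] (m + 1)) ≤ hardy r (Nat.succ^[m] m)
    rw [Nat.succ_iterate, Nat.succ_iterate]
    exact hardy_mono r (by omega)
  | zero, oadd b₁ b₂, r, n, m, h => by
    show hardy (repPair (oadd b₁ b₂) r n) (m + 1) ≤ hardy (rep (oadd b₁ b₂) r m) m
    rw [hardy_repPair, hardy_rep]
    exact hardy_mono r (iterate_comp_add_one_le_iterate (hardyPow_strictMono _)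
      (two_mul_le_hardyPow (by simp)) (by omega))
  | oadd a₁ a₂, b, r, n, m, h => by
    show hardy (oadd (fundW (oadd (oadd a₁ a₂) b) n) r) (m + 1)
      ≤ hardy (oadd (fund (oadd (oadd a₁ a₂) b) m) r) m
    rw [hardy_oadd, hardy_oadd]
    exact hardy_mono r (hardyPow_fundW_le_fund (by simp) b h)

theorem wormHardy_le_hardy : ∀ (t : T) {n m : ℕ}, n + 2 ≤ m → wormHardy t n ≤ hardy t m
  | zero, n, m, h => by simp only [wormHardy_zero, hardy_zero]; omega
  | oadd zero r, n, m, h => by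
    rw [wormHardy_succ, hardy_succ]
    exact wormHardy_le_hardy r (by omega)
  | oadd (oadd a b) r, n, m, h => by
    rw [wormHardy_lim, hardy_lim]
    exact (wormHardy_le_hardy _ (by omega : n + 1 + 2 ≤ m + 1)).trans
      (hardy_fundW_le_fund a b r h)
termination_by t => o t
decreasing_by
  · exact o_lt_oadd _ _
  · exact o_fundW_lt (by simp) _ _

end T

theorem HG.eq_hardy {t : T} {x y : ℕ} (h : HG t x y) : y = t.hardy x := by
  induction h with
  | zero x => simp
  | succ _ ih => simpa using ih
  | @lim e r x y he _ ih =>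
    cases e with
    | zero => exact absurd rfl he
    | oadd a b => rwa [T.hardy_lim]

theorem hG_wormHardy : ∀ (t : T) (x : ℕ), hG t x (t.wormHardy x)
  | .zero, x => by simpa using hG.zero x
  | .oadd .zero r, x => by simpa using hG.succ (hG_wormHardy r (x + 1))
  | .oadd (.oadd a b) r, x => by
    rw [T.wormHardy_lim]
    exact hG.lim (by simp) (hG_wormHardy _ (x + 1))
termination_by t => t.o
decreasing_by
  · exact T.o_lt_oadd _ _
  · exact T.o_fundW_lt (by simp) _ _

/-- If `m ≥ n + 2` and `H_t(m)` is defined (with value `M`)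
for a tree ordinal `t`, then `h_t(n)` is defined and `h_t(n) ≤ H_t(m)`, where
`H` uses the standard and `h` the worm-induced fundamental sequences. -/
theorem hardy_worm_le_hardy_standard (t : T) (n m : ℕ) (h : n + 2 ≤ m)
    (M : ℕ) (hH : HG t m M) :
    ∃ y, hG t n y ∧ y ≤ M := by
  obtain rfl := hH.eq_hardy
  exact ⟨t.wormHardy n, hG_wormHardy t n, t.wormHardy_le_hardy h⟩
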